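/- arXiv:0710.4111 — 3 statements merged into one kernel-verified Lean document; each statement's English description precedes it below -/
import Mathlib

section
/- Let τ be a linear functional on non-commutative polynomials in N variables satisfying |τ(X_{i_1}···X_{i_m})| ≤ R_0^m for all m. Let Θ be a non-commutative double power series with multi-radius of convergence at least R > R_0. Then the partial contraction (1⊗τ)(Θ), whose coefficient of X_{i_1}···X_{i_n} is Σ_{m, j_1,...,j_m} Θ_{i_1...i_n; j_1...j_m} τ(X_{j_1}···X_{j_m}), is well-defined (the defining sums converge absolutely), satisfies φ_{(1⊗τ)(Θ)}(z) ≺ φ_Θ(z, N R_0), belongs to the class of series with multi-radius of convergence at least R, and satisfies ‖(1⊗τ)(Θ)‖_ρ ≤ ‖Θ‖_ρ for all ρ with R_0 < ρ < R. -/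
/-!
Each term of the contraction satisfies `‖Θ(u,v) τ(v)‖ ≤ c_Θ(|u|,m) R₀^m` with `m = |v|`, and there
are `N^m` words of length `m`, so the `u`-th coefficient is bounded by the row
`∑ₘ c_Θ(|u|,m) (N R₀)^m` of `φ_Θ(z, N R₀)`. For `R₀ < σ < R` this row times `(Nσ)^|u|` is at
most `‖Θ‖_σ < ∞`, which gives absolute convergence; summing the rows against `(Nρ)^n` gives the
norm bound.
-/

open scoped BigOperators ENNReal NNReal

noncomputable def ncCoeffBound {N : ℕ} (f : List (Fin N) → ℂ) (n : ℕ) : ℝ :=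
  sSup {r : ℝ | ∃ w : List (Fin N), w.length = n ∧ r = ‖f w‖}

noncomputable def ncNormRho {N : ℕ} (f : List (Fin N) → ℂ) (ρ : ℝ≥0) : ℝ≥0∞ :=
  ∑' n : ℕ, ENNReal.ofReal (ncCoeffBound f n) * (N : ℝ≥0∞) ^ n * (ρ : ℝ≥0∞) ^ n

noncomputable def ncCoeffBound2 {N : ℕ} (Ψ : List (Fin N) × List (Fin N) → ℂ) (n m : ℕ) : ℝ :=
  sSup {r : ℝ | ∃ u v : List (Fin N), u.length = n ∧ v.length = m ∧ r = ‖Ψ (u, v)‖}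

noncomputable def ncNorm2 {N : ℕ} (Ψ : List (Fin N) × List (Fin N) → ℂ) (ρ : ℝ≥0) : ℝ≥0∞ :=
  ∑' p : ℕ × ℕ, ENNReal.ofReal (ncCoeffBound2 Ψ p.1 p.2) *
    ((N : ℝ≥0∞) * (ρ : ℝ≥0∞)) ^ (p.1 + p.2)

lemma norm_le_ncCoeffBound2 {N : ℕ} (Θ : List (Fin N) × List (Fin N) → ℂ) (u v : List (Fin N)) :
    ‖Θ (u, v)‖ ≤ ncCoeffBound2 Θ u.length v.length := by
  have hfin : {r : ℝ | ∃ a b : List (Fin N), a.length = u.length ∧ b.length = v.length ∧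
      r = ‖Θ (a, b)‖}.Finite := by
    refine (((List.finite_length_eq (Fin N) u.length).prod
      (List.finite_length_eq (Fin N) v.length)).image fun p => ‖Θ p‖).subset ?_
    rintro r ⟨a, b, ha, hb, rfl⟩
    exact ⟨(a, b), ⟨ha, hb⟩, rfl⟩
  exact le_csSup hfin.bddAbove ⟨u, v, rfl, rfl, rfl⟩

lemma ofReal_ncCoeffBound_le {N : ℕ} {f : List (Fin N) → ℂ} {n : ℕ} {S : ℝ≥0∞}
    (h : ∀ w : List (Fin N), w.length = n → ‖f w‖ₑ ≤ S) :
    ENNReal.ofReal (ncCoeffBound f n) ≤ S := by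
  rcases eq_or_ne S ⊤ with rfl | hS
  · exact le_top
  refine (ENNReal.ofReal_le_iff_le_toReal hS).2 (Real.sSup_le ?_ ENNReal.toReal_nonneg)
  rintro r ⟨w, hw, rfl⟩
  exact (ENNReal.ofReal_le_iff_le_toReal hS).1 ((ofReal_norm _).trans_le (h w hw))

lemma tsum_list_le_tsum_card_pow_mul {α : Type*} [Fintype α] (f : List α → ℝ≥0∞)
    (c : ℕ → ℝ≥0∞) (h : ∀ v, f v ≤ c v.length) :
    ∑' v, f v ≤ ∑' m, (Fintype.card α : ℝ≥0∞) ^ m * c m := by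
  rw [← (Equiv.sigmaFiberEquiv (List.length : List α → ℕ)).tsum_eq, ENNReal.tsum_sigma']
  refine ENNReal.tsum_le_tsum fun m => ?_
  change ∑' v : List.Vector α m, f v.toList ≤ _
  rw [tsum_fintype]
  calc ∑ v : List.Vector α m, f v.toList ≤ Fintype.card (List.Vector α m) • c m :=
        Finset.sum_le_card_nsmul _ _ _ fun v _ => by simpa using h v.toList
    _ = (Fintype.card α : ℝ≥0∞) ^ m * c m := by
        rw [card_vector, nsmul_eq_mul, Nat.cast_pow]

/-- The `n`-th row `∑ₘ c_Θ(n,m) (N r)^m` of the majorant `φ_Θ(z, N r)`. -/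
noncomputable def ncRowMajorant {N : ℕ} (Θ : List (Fin N) × List (Fin N) → ℂ) (n : ℕ)
    (r : ℝ≥0) : ℝ≥0∞ :=
  ∑' m : ℕ, ENNReal.ofReal (ncCoeffBound2 Θ n m) * ((N : ℝ≥0∞) * (r : ℝ≥0∞)) ^ m

section Contraction

variable {N : ℕ} (Θ : List (Fin N) × List (Fin N) → ℂ)

lemma ncRowMajorant_mono (n : ℕ) {r σ : ℝ≥0} (h : r ≤ σ) :
    ncRowMajorant Θ n r ≤ ncRowMajorant Θ n σ := by
  unfold ncRowMajorant
  gcongr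

lemma ncNorm2_eq_tsum_ncRowMajorant (σ : ℝ≥0) :
    ncNorm2 Θ σ = ∑' n : ℕ, ncRowMajorant Θ n σ * ((N : ℝ≥0∞) * (σ : ℝ≥0∞)) ^ n := by
  rw [ncNorm2, ENNReal.tsum_prod']
  refine tsum_congr fun n => ?_
  rw [ncRowMajorant, ← ENNReal.tsum_mul_right]
  refine tsum_congr fun m => ?_
  rw [add_comm, pow_add, mul_assoc]

lemma ncRowMajorant_lt_top {σ : ℝ≥0} (hΘ : ncNorm2 Θ σ < ⊤) (hσ : 0 < σ) {r : ℝ≥0}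
    (hr : r ≤ σ) (u : List (Fin N)) : ncRowMajorant Θ u.length r < ⊤ := by
  have hpow : ((N : ℝ≥0∞) * (σ : ℝ≥0∞)) ^ u.length ≠ 0 := by
    cases u with
    | nil => simp
    | cons i _ => exact pow_ne_zero _ (mul_ne_zero (by simp [i.pos.ne']) (by simp [hσ.ne']))
  have hrow : ncRowMajorant Θ u.length r * ((N : ℝ≥0∞) * (σ : ℝ≥0∞)) ^ u.length < ⊤ :=
    calc _ ≤ ncRowMajorant Θ u.length σ * ((N : ℝ≥0∞) * (σ : ℝ≥0∞)) ^ u.length := by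
          gcongr; exact ncRowMajorant_mono Θ _ hr
      _ ≤ ncNorm2 Θ σ := by
          rw [ncNorm2_eq_tsum_ncRowMajorant]
          exact ENNReal.le_tsum (f := fun n => _ * _ ^ n) u.length
      _ < ⊤ := hΘ
  exact ENNReal.lt_top_of_mul_ne_top_left hrow.ne hpow

variable {τ : List (Fin N) → ℂ} {R₀ : ℝ≥0} (hτ : ∀ w : List (Fin N), ‖τ w‖ ≤ (R₀ : ℝ) ^ w.length)
include hτ

lemma tsum_enorm_mul_le_ncRowMajorant (u : List (Fin N)) :
    ∑' v, ‖Θ (u, v) * τ v‖ₑ ≤ ncRowMajorant Θ u.length R₀ := by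
  have hterm : ∀ v : List (Fin N), ‖Θ (u, v) * τ v‖ₑ ≤
      ENNReal.ofReal (ncCoeffBound2 Θ u.length v.length) * (R₀ : ℝ≥0∞) ^ v.length := by
    intro v
    rw [enorm_mul, ← ofReal_norm, ← ofReal_norm, ← ENNReal.ofReal_coe_nnreal,
      ← ENNReal.ofReal_pow R₀.coe_nonneg]
    exact mul_le_mul' (ENNReal.ofReal_le_ofReal (norm_le_ncCoeffBound2 Θ u v))
      (ENNReal.ofReal_le_ofReal (hτ v))
  refine (tsum_list_le_tsum_card_pow_mul _
    (fun m => ENNReal.ofReal (ncCoeffBound2 Θ u.length m) * (R₀ : ℝ≥0∞) ^ m) hterm).trans_eq (tsum_congr fun m => ?_)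
  rw [Fintype.card_fin, mul_pow]
  ring

lemma ofReal_ncCoeffBound_contract_le (n : ℕ) :
    ENNReal.ofReal (ncCoeffBound (fun u => ∑' v : List (Fin N), Θ (u, v) * τ v) n) ≤
      ncRowMajorant Θ n R₀ :=
  ofReal_ncCoeffBound_le fun u hu =>
    hu ▸ enorm_tsum_le_tsum_enorm.trans (tsum_enorm_mul_le_ncRowMajorant Θ hτ u)

lemma ncNormRho_contract_le {ρ : ℝ≥0} (hρ : R₀ ≤ ρ) :
    ncNormRho (fun u => ∑' v : List (Fin N), Θ (u, v) * τ v) ρ ≤ ncNorm2 Θ ρ := by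
  rw [ncNormRho, ncNorm2_eq_tsum_ncRowMajorant]
  refine ENNReal.tsum_le_tsum fun n => ?_
  rw [mul_assoc, ← mul_pow]
  gcongr
  exact (ofReal_ncCoeffBound_contract_le Θ hτ n).trans (ncRowMajorant_mono Θ n hρ)

end Contraction

/-- Let `τ` be a linear functional on non-commutative polynomials with
`|τ(X_{j₁}⋯X_{j_m})| ≤ R₀^m`, and `Θ` a double power series with multi-radius of
convergence at least `R > R₀`. Then the partial contraction `(1⊗τ)(Θ)` is well-defined
(the coefficient sums converge absolutely), its majorant satisfies
`φ_{(1⊗τ)Θ}(z) ≺ φ_Θ(z, N R₀)` coefficientwise, and `‖(1⊗τ)(Θ)‖_ρ ≤ ‖Θ‖_ρ` for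
`R₀ < ρ < R`; in particular `(1⊗τ)(Θ)` has multi-radius of convergence at least `R`. -/
theorem contraction_bounds (N : ℕ) (Θ : List (Fin N) × List (Fin N) → ℂ)
    (τ : List (Fin N) → ℂ) (R R₀ : ℝ≥0) (hR : R₀ < R)
    (hτ : ∀ w : List (Fin N), ‖τ w‖ ≤ (R₀ : ℝ) ^ w.length)
    (hΘ : ∀ σ : ℝ≥0, σ < R → ncNorm2 Θ σ < ⊤) :
    (∀ u : List (Fin N), Summable (fun v : List (Fin N) => Θ (u, v) * τ v)) ∧
    (∀ n : ℕ, ENNReal.ofReal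
        (ncCoeffBound (fun u => ∑' v : List (Fin N), Θ (u, v) * τ v) n) ≤
      ∑' m : ℕ, ENNReal.ofReal (ncCoeffBound2 Θ n m) * ((N : ℝ≥0∞) * (R₀ : ℝ≥0∞)) ^ m) ∧
    (∀ ρ : ℝ≥0, R₀ < ρ → ρ < R →
      ncNormRho (fun u => ∑' v : List (Fin N), Θ (u, v) * τ v) ρ ≤ ncNorm2 Θ ρ) := by
  obtain ⟨σ, hR₀σ, hσR⟩ := exists_between hR
  refine ⟨fun u => .of_enorm ?_, ofReal_ncCoeffBound_contract_le Θ hτ,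
    fun ρ hρ _ => ncNormRho_contract_le Θ hτ hρ.le⟩
  exact ((tsum_enorm_mul_le_ncRowMajorant Θ hτ u).trans_lt
    (ncRowMajorant_lt_top Θ (hΘ σ hσR) (pos_of_gt hR₀σ) hR₀σ.le u)).ne
end

section
/- Let α_1, α_2 be functions analytic on the disc |z| < R with nonnegative Taylor coefficients, and define operators on power series with nonnegative coefficients by Q_1φ = α_1 φ'' and Q_2φ = α_2 φ. Then for any power series φ with nonnegative coefficients and any choice i_1,...,i_n ∈ {1,2} with exactly k indices equal to 1, one has the coefficientwise domination Q_{i_1}···Q_{i_n}φ ≺ Q_1^k(Q_2^{n-k}φ). -/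
open scoped BigOperators

/-- Cauchy product of coefficient sequences: multiplication of formal power series. -/
noncomputable def psMul (a b : ℕ → ℝ) : ℕ → ℝ :=
  fun n => ∑ k ∈ Finset.range (n + 1), a k * b (n - k)

/-- Second derivative of a formal power series, on coefficients. -/
def psD2 (φ : ℕ → ℝ) : ℕ → ℝ := fun n => (((n : ℝ) + 2) * ((n : ℝ) + 1)) * φ (n + 2)

/-- Apply a word in the operators `Q₁φ = α₁ φ''` and `Q₂φ = α₂ φ` to `φ`
(`true` stands for `Q₁`, `false` for `Q₂`). -/
noncomputable def applyWord (α₁ α₂ : ℕ → ℝ) : List Bool → (ℕ → ℝ) → ℕ → ℝ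
  | [], φ => φ
  | b :: w, φ =>
      if b then psMul α₁ (psD2 (applyWord α₁ α₂ w φ))
      else psMul α₂ (applyWord α₁ α₂ w φ)

lemma psMul_coeff (a b : ℕ → ℝ) (n : ℕ) :
    psMul a b n = PowerSeries.coeff n (PowerSeries.mk a * PowerSeries.mk b) := by
  rw [PowerSeries.coeff_mul, Finset.Nat.sum_antidiagonal_eq_sum_range_succ_mk]
  simp [psMul]

lemma psMul_mk (a b : ℕ → ℝ) :
    PowerSeries.mk (psMul a b) = PowerSeries.mk a * PowerSeries.mk b := by
  ext n
  rw [PowerSeries.coeff_mk, psMul_coeff]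

lemma psMul_left_comm (a b c : ℕ → ℝ) :
    psMul a (psMul b c) = psMul b (psMul a c) := by
  funext n
  rw [psMul_coeff, psMul_coeff, psMul_mk, psMul_mk, mul_left_comm]

lemma psMul_nonneg {a b : ℕ → ℝ} (ha : ∀ n, 0 ≤ a n) (hb : ∀ n, 0 ≤ b n) :
    ∀ n, 0 ≤ psMul a b n := fun n =>
  Finset.sum_nonneg fun k _ => mul_nonneg (ha k) (hb _)

lemma psD2_nonneg {a : ℕ → ℝ} (ha : ∀ n, 0 ≤ a n) : ∀ n, 0 ≤ psD2 a n := fun n =>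
  mul_nonneg (by positivity) (ha _)

lemma psMul_mono {a f g : ℕ → ℝ} (ha : ∀ n, 0 ≤ a n) (h : ∀ n, f n ≤ g n) :
    ∀ n, psMul a f n ≤ psMul a g n := fun n =>
  Finset.sum_le_sum fun k _ => mul_le_mul_of_nonneg_left (h _) (ha k)

lemma psD2_mono {f g : ℕ → ℝ} (h : ∀ n, f n ≤ g n) :
    ∀ n, psD2 f n ≤ psD2 g n := fun n =>
  mul_le_mul_of_nonneg_left (h _) (by positivity)

/-- `θ · ψ'' ≺ (θψ)''` coefficientwise for nonnegative series. -/
lemma psMul_psD2_le {θ ψ : ℕ → ℝ} (hθ : ∀ n, 0 ≤ θ n) (hψ : ∀ n, 0 ≤ ψ n) :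
    ∀ n, psMul θ (psD2 ψ) n ≤ psD2 (psMul θ ψ) n := by
  intro n
  have h1 : psMul θ (psD2 ψ) n ≤
      ∑ k ∈ Finset.range (n + 1),
        (((n : ℝ) + 2) * ((n : ℝ) + 1)) * (θ k * ψ (n + 2 - k)) := by
    refine Finset.sum_le_sum fun k hk => ?_
    have hkn : k ≤ n := Nat.lt_succ_iff.mp (Finset.mem_range.mp hk)
    have harg : n - k + 2 = n + 2 - k := by omega
    have hle : ((n : ℝ) - k + 2) * ((n : ℝ) - k + 1) ≤ ((n : ℝ) + 2) * ((n : ℝ) + 1) := by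
      have hknR : (k : ℝ) ≤ n := by exact_mod_cast hkn
      have hk0 : (0 : ℝ) ≤ k := Nat.cast_nonneg k
      nlinarith
    have hcast : ((n - k : ℕ) : ℝ) = (n : ℝ) - k := Nat.cast_sub hkn
    simp only [psD2, harg, hcast]
    calc θ k * (((n : ℝ) - k + 2) * ((n : ℝ) - k + 1) * ψ (n + 2 - k))
        = (((n : ℝ) - k + 2) * ((n : ℝ) - k + 1)) * (θ k * ψ (n + 2 - k)) := by ring
      _ ≤ (((n : ℝ) + 2) * ((n : ℝ) + 1)) * (θ k * ψ (n + 2 - k)) :=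
          mul_le_mul_of_nonneg_right hle (mul_nonneg (hθ k) (hψ _))
  have h2 : ∑ k ∈ Finset.range (n + 1),
        (((n : ℝ) + 2) * ((n : ℝ) + 1)) * (θ k * ψ (n + 2 - k)) ≤
      ∑ k ∈ Finset.range (n + 3),
        (((n : ℝ) + 2) * ((n : ℝ) + 1)) * (θ k * ψ (n + 2 - k)) := by
    refine Finset.sum_le_sum_of_subset_of_nonneg (by
      intro x hx; simp only [Finset.mem_range] at *; omega) ?_
    intro k _ _
    exact mul_nonneg (by positivity) (mul_nonneg (hθ k) (hψ _))
  refine (h1.trans h2).trans_eq ?_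
  simp only [psD2, psMul, Finset.mul_sum]

lemma applyWord_nonneg (α₁ α₂ : ℕ → ℝ) (h1 : ∀ n, 0 ≤ α₁ n) (h2 : ∀ n, 0 ≤ α₂ n)
    {φ : ℕ → ℝ} (hφ : ∀ n, 0 ≤ φ n) :
    ∀ w : List Bool, ∀ n, 0 ≤ applyWord α₁ α₂ w φ n := by
  intro w
  induction w with
  | nil => exact hφ
  | cons b w ih =>
    cases b
    · exact psMul_nonneg h2 ih
    · exact psMul_nonneg h1 (psD2_nonneg ih)

lemma applyWord_append (α₁ α₂ : ℕ → ℝ) (u v : List Bool) (φ : ℕ → ℝ) :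
    applyWord α₁ α₂ (u ++ v) φ = applyWord α₁ α₂ u (applyWord α₁ α₂ v φ) := by
  induction u with
  | nil => rfl
  | cons b u ih => cases b <;> simp [applyWord, ih]

/-- The key swap: `Q₂ (Q₁ ψ) ≺ Q₁ (Q₂ ψ)`. -/
lemma swap_le (α₁ α₂ : ℕ → ℝ) (h1 : ∀ n, 0 ≤ α₁ n) (h2 : ∀ n, 0 ≤ α₂ n)
    {ψ : ℕ → ℝ} (hψ : ∀ n, 0 ≤ ψ n) :
    ∀ n, psMul α₂ (psMul α₁ (psD2 ψ)) n ≤ psMul α₁ (psD2 (psMul α₂ ψ)) n := by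
  intro n
  rw [psMul_left_comm]
  exact psMul_mono h1 (psMul_psD2_le h2 hψ) n

/-- Push `Q₂` past `Q₁^k`. -/
lemma push_le (α₁ α₂ : ℕ → ℝ) (h1 : ∀ n, 0 ≤ α₁ n) (h2 : ∀ n, 0 ≤ α₂ n) :
    ∀ (k : ℕ) {ψ : ℕ → ℝ}, (∀ n, 0 ≤ ψ n) → ∀ n,
      psMul α₂ (applyWord α₁ α₂ (List.replicate k true) ψ) n ≤
        applyWord α₁ α₂ (List.replicate k true) (psMul α₂ ψ) n := by
  intro k
  induction k with
  | zero => intro ψ hψ n; simp [applyWord]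
  | succ k ih =>
    intro ψ hψ n
    have hA : ∀ m, 0 ≤ applyWord α₁ α₂ (List.replicate k true) ψ m :=
      applyWord_nonneg α₁ α₂ h1 h2 hψ _
    simp only [List.replicate_succ, applyWord, if_pos]
    calc psMul α₂ (psMul α₁ (psD2 (applyWord α₁ α₂ (List.replicate k true) ψ))) n
        ≤ psMul α₁ (psD2 (psMul α₂ (applyWord α₁ α₂ (List.replicate k true) ψ))) n :=
          swap_le α₁ α₂ h1 h2 hA n
      _ ≤ psMul α₁ (psD2 (applyWord α₁ α₂ (List.replicate k true) (psMul α₂ ψ))) n :=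
          psMul_mono h1 (psD2_mono (ih hψ)) n

/-- For series with nonnegative coefficients, any word in `Q₁, Q₂` containing `k`
letters `Q₁` is coefficientwise dominated by `Q₁^k Q₂^{n-k}`:
`Q_{i₁}⋯Q_{i_n} φ ≺ Q₁^k Q₂^{n-k} φ`. -/
theorem applyWord_le_sorted (α₁ α₂ φ : ℕ → ℝ)
    (h1 : ∀ n, 0 ≤ α₁ n) (h2 : ∀ n, 0 ≤ α₂ n) (hφ : ∀ n, 0 ≤ φ n)
    (w : List Bool) :
    ∀ n, applyWord α₁ α₂ w φ n ≤
      applyWord α₁ α₂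
        (List.replicate (w.count true) true ++ List.replicate (w.count false) false) φ n := by
  induction w with
  | nil => intro n; simp [applyWord]
  | cons b w ih =>
    intro n
    cases b
    · -- b = false : Q₂
      have hct : (false :: w).count true = w.count true := by simp
      have hcf : (false :: w).count false = w.count false + 1 := by simp
      rw [hct, hcf, List.replicate_succ]
      have step1 : applyWord α₁ α₂ (false :: w) φ n ≤
          psMul α₂ (applyWord α₁ α₂
            (List.replicate (w.count true) true ++ List.replicate (w.count false) false) φ) n := by
        simp only [applyWord, if_neg Bool.false_ne_true, Bool.false_eq_true, if_false]
        exact psMul_mono h2 ih n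
      refine step1.trans ?_
      rw [applyWord_append, applyWord_append]
      have hψ : ∀ m, 0 ≤ applyWord α₁ α₂ (List.replicate (w.count false) false) φ m :=
        applyWord_nonneg α₁ α₂ h1 h2 hφ _
      have := push_le α₁ α₂ h1 h2 (w.count true) hψ n
      refine this.trans_eq ?_
      rfl
    · -- b = true : Q₁
      have hct : (true :: w).count true = w.count true + 1 := by simp
      have hcf : (true :: w).count false = w.count false := by simp
      rw [hct, hcf, List.replicate_succ, List.cons_append]
      show psMul α₁ (psD2 (applyWord α₁ α₂ w φ)) n ≤
        psMul α₁ (psD2 (applyWord α₁ α₂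
          (List.replicate (w.count true) true ++ List.replicate (w.count false) false) φ)) n
      exact psMul_mono h1 (psD2_mono ih) n
end

section
/- Let N ≥ 1 and |q| < (4N^3 + 2)^{-1}. Then there exists α > 1 such that the geometric series Σ_{n≥0} (4N^3 α |q| / (1 - 2|q|))^n converges; in particular 4N^3|q|/(1-2|q|) < 1, so the series Σ_n |q|^n N^n · (4N^2α^2/(1-2|q|))^n · K converges for suitable α > 1 and any constant K. Consequently the series Ξ(Y) = Σ_n q^n Σ_{i_1,...,i_n} p_{i_1,...,i_n} ⊗ p_{i_1,...,i_n}, where each ‖p_{i_1,...,i_n}‖_ρ ≤ (2Nα/(1-2|q|)^{1/2})^n /(1 - ρ/(αR_0)), has ‖Ξ‖_ρ < ∞ for every ρ < αR_0 with R_0 = 2(1-|q|)^{-1}; i.e., Ξ has multi-radius of convergence strictly greater than 2(1-q)^{-1}, which dominates the norm of a q-semicircular element. -/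
/-- For `N ≥ 1` and `|q| < (4N³+2)⁻¹`, one has `4N³|q|/(1-2|q|) < 1`, and there is
`α > 1` with `4N³α|q|/(1-2|q|) < 1` such that for every `0 ≤ ρ < α R₀` (where
`R₀ = 2(1-|q|)⁻¹`) and any coefficients `p n` satisfying the orthonormalized q-Wick
bound `0 ≤ p n ≤ (2Nα/(1-2|q|)^{1/2})^n (1 - ρ/(αR₀))⁻¹`, the series
`∑ₙ |q|^n N^n (p n)²` (dominating `‖Ξ‖_ρ`) converges; i.e. `Ξ` has multi-radius of
convergence `> 2(1-q)⁻¹ ≥ ‖X_j‖`. -/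
theorem Xi_analytic (N : ℕ) (hN : 1 ≤ N) (q : ℝ)
    (hq : |q| < (4 * (N : ℝ) ^ 3 + 2)⁻¹) :
    4 * (N : ℝ) ^ 3 * |q| / (1 - 2 * |q|) < 1 ∧
    ∃ α : ℝ, 1 < α ∧ 4 * (N : ℝ) ^ 3 * α * |q| / (1 - 2 * |q|) < 1 ∧
      ∀ ρ : ℝ, 0 ≤ ρ → ρ < α * (2 * (1 - |q|)⁻¹) →
        ∀ p : ℕ → ℝ,
          (∀ n : ℕ, 0 ≤ p n ∧
            p n ≤ (2 * (N : ℝ) * α / Real.sqrt (1 - 2 * |q|)) ^ n *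
              (1 - ρ / (α * (2 * (1 - |q|)⁻¹)))⁻¹) →
          Summable fun n : ℕ => |q| ^ n * (N : ℝ) ^ n * p n ^ 2 := by
  have hN1 : (1:ℝ) ≤ (N:ℝ) := by exact_mod_cast hN
  have hq0 : 0 ≤ |q| := abs_nonneg q
  have hq4 : (0:ℝ) < 4 * (N:ℝ) ^ 3 + 2 := by positivity
  have hqlt : (4 * (N:ℝ) ^ 3 + 2) * |q| < 1 := by
    have h := mul_lt_mul_of_pos_left hq hq4
    rwa [mul_inv_cancel₀ (ne_of_gt hq4)] at h
  have hexp : 4 * (N:ℝ) ^ 3 * |q| + 2 * |q| = (4 * (N:ℝ) ^ 3 + 2) * |q| := by ring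
  have hNq : 0 ≤ 4 * (N:ℝ) ^ 3 * |q| := by positivity
  have hD : 0 < 1 - 2 * |q| := by linarith
  have h4 : 4 * (N:ℝ) ^ 3 * |q| < 1 - 2 * |q| := by linarith
  set r : ℝ := 4 * (N:ℝ) ^ 3 * |q| / (1 - 2 * |q|) with hr_def
  have hr1 : r < 1 := (div_lt_one hD).mpr h4
  have hr0 : 0 ≤ r := by positivity
  have h1r : 0 < 1 + r := by linarith
  set α : ℝ := Real.sqrt (2 / (1 + r)) with hα_def
  have hαsq : α ^ 2 = 2 / (1 + r) := Real.sq_sqrt (by positivity)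
  have hα1 : 1 < α := by
    have h2r : 1 < 2 / (1 + r) := by
      rw [lt_div_iff₀ h1r]; linarith
    have := Real.sqrt_lt_sqrt (by norm_num) h2r
    rwa [Real.sqrt_one] at this
  have hα0 : 0 < α := lt_trans one_pos hα1
  have hα2r : α ^ 2 * r < 1 := by
    rw [hαsq, div_mul_eq_mul_div, div_lt_one h1r]; linarith
  refine ⟨hr1, α, hα1, ?_, ?_⟩
  · have heq : 4 * (N:ℝ) ^ 3 * α * |q| / (1 - 2 * |q|) = α * r := by
      rw [hr_def]; ring
    rw [heq]
    have : α * r ≤ α ^ 2 * r := by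
      apply mul_le_mul_of_nonneg_right _ hr0
      nlinarith
    linarith
  · intro ρ hρ0 hρ p hp
    set C : ℝ := (1 - ρ / (α * (2 * (1 - |q|)⁻¹)))⁻¹ with hC_def
    set B : ℝ := 2 * (N:ℝ) * α / Real.sqrt (1 - 2 * |q|) with hB_def
    have hC0 : 0 ≤ C := by
      have h0 := hp 0
      simp only [pow_zero, one_mul] at h0
      exact le_trans h0.1 h0.2
    have hB2 : B ^ 2 = 4 * (N:ℝ) ^ 2 * α ^ 2 / (1 - 2 * |q|) := by
      rw [hB_def, div_pow, Real.sq_sqrt hD.le]; ring_nf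
    have hkey : |q| * (N:ℝ) * B ^ 2 = α ^ 2 * r := by
      rw [hB2, hr_def]; field_simp
    have hsum : Summable fun n : ℕ => C ^ 2 * (α ^ 2 * r) ^ n :=
      (summable_geometric_of_lt_one (by positivity) hα2r).mul_left (C ^ 2)
    refine Summable.of_nonneg_of_le (fun n => ?_) (fun n => ?_) hsum
    · exact mul_nonneg (mul_nonneg (by positivity) (by positivity)) (sq_nonneg _)
    · have hpn := hp n
      have hsq : p n ^ 2 ≤ (B ^ n * C) ^ 2 := by
        apply pow_le_pow_left₀ hpn.1 hpn.2
      have h1 : |q| ^ n * (N:ℝ) ^ n * p n ^ 2 ≤ |q| ^ n * (N:ℝ) ^ n * (B ^ n * C) ^ 2 := by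
        apply mul_le_mul_of_nonneg_left hsq (by positivity)
      have h2 : |q| ^ n * (N:ℝ) ^ n * (B ^ n * C) ^ 2 = C ^ 2 * (|q| * (N:ℝ) * B ^ 2) ^ n := by
        rw [mul_pow, mul_pow, mul_pow, ← pow_mul, ← pow_mul, mul_comm n 2, pow_mul]
        ring
      rw [← hkey]
      linarith [h1, le_of_eq h2]
end
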